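/- arXiv:1807.03782 — 3 statements merged into one kernel-verified Lean document; each statement's English description precedes it below -/
import Mathlib

section
/- Let P : ℂ → ℂ be a polynomial of degree d ≥ 1 and q : ℂⁿ → ℂ a nonconstant polynomial such that the composite g = P ∘ q has nowhere-vanishing gradient (i.e., g is a submersion at every point). Then d = 1. -/
/-!
If `deg P ≥ 2`, then `P'` has a root `c`. A nonconstant polynomial function on `ℂⁿ` is surjective,
since its restriction to a line on which it is nonconstant is a nonconstant polynomial in one
variable; so `q a = c` for some `a`, and by the chain rule `∇g(a) = P'(q a) • ∇q(a) = 0`.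
-/

open Polynomial

theorem Polynomial.fderiv_eval_comp {𝕜 E : Type*} [NontriviallyNormedField 𝕜]
    [NormedAddCommGroup E] [NormedSpace 𝕜 E] {f : E → 𝕜} {x : E} (p : 𝕜[X])
    (hf : DifferentiableAt 𝕜 f x) :
    fderiv 𝕜 (fun v => p.eval (f v)) x = p.derivative.eval (f x) • fderiv 𝕜 f x :=
  ((p.hasDerivAt (f x)).comp_hasFDerivAt x hf.hasFDerivAt).fderiv

namespace MvPolynomial

theorem exists_polynomial_eval_eq_eval_lineMap {σ R : Type*} [CommRing R]
    (q : MvPolynomial σ R) (x y : σ → R) :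
    ∃ f : R[X], ∀ t, f.eval t = eval (AffineMap.lineMap x y t) q := by
  refine ⟨aeval (fun i => Polynomial.X * Polynomial.C (y i - x i) + Polynomial.C (x i)) q,
    fun t => ?_⟩
  rw [← Polynomial.coe_aeval_eq_eval, ← AlgHom.comp_apply, comp_aeval]
  change eval _ q = _
  congr 2
  funext i
  simp [AffineMap.lineMap_apply_module']

theorem eval_surjective_of_eval_ne {σ K : Type*} [Field K] [IsAlgClosed K]
    {q : MvPolynomial σ K} {x y : σ → K} (hxy : eval x q ≠ eval y q) :
    Function.Surjective fun v => eval v q := by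
  obtain ⟨f, hf⟩ := q.exists_polynomial_eval_eq_eval_lineMap x y
  have hf_natDegree : f.natDegree ≠ 0 := by
    intro h
    obtain ⟨a, rfl⟩ := natDegree_eq_zero.mp h
    have h0 := hf 0
    have h1 := hf 1
    simp only [Polynomial.eval_C, AffineMap.lineMap_apply_zero, AffineMap.lineMap_apply_one]
      at h0 h1
    exact hxy (h0.symm.trans h1)
  intro c
  obtain ⟨t, rfl⟩ := IsAlgClosed.eval_surjective hf_natDegree c
  exact ⟨_, (hf t).symm⟩

end MvPolynomial

theorem stmt1 (n d : ℕ) (hd : 1 ≤ d) (P : Polynomial ℂ) (hP : P.natDegree = d)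
    (q : MvPolynomial (Fin n) ℂ)
    (hq : ∃ x y : Fin n → ℂ, MvPolynomial.eval x q ≠ MvPolynomial.eval y q)
    (hsub : ∀ x : Fin n → ℂ,
      fderiv ℂ (fun v : Fin n → ℂ => Polynomial.eval (MvPolynomial.eval v q) P) x ≠ 0) :
    d = 1 := by
  by_contra hd_ne
  have hP' : P.derivative.degree ≠ 0 := by
    rw [degree_derivative (by omega)]
    exact_mod_cast (by omega : P.natDegree - 1 ≠ 0)
  obtain ⟨c, hc⟩ := IsAlgClosed.exists_root _ hP'
  obtain ⟨x, y, hxy⟩ := hq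
  obtain ⟨a, rfl⟩ := MvPolynomial.eval_surjective_of_eval_ne hxy c
  apply hsub a
  rw [P.fderiv_eval_comp ((AnalyticOnNhd.eval_mvPolynomial q a trivial).differentiableAt),
    hc.eq_zero]
  exact zero_smul ℂ (fderiv ℂ (fun v => MvPolynomial.eval v q) a)
end

section
/- Let f : ℂⁿ → ℂⁿ be a polynomial map with constant nonzero Jacobian determinant. If f is injective, then f is bijective (hence a polynomial automorphism). -/
theorem stmt2 (n : ℕ) (f : (Fin n → ℂ) → (Fin n → ℂ))
    (hpoly : ∀ i : Fin n, ∃ p : MvPolynomial (Fin n) ℂ,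
      ∀ x : Fin n → ℂ, f x i = MvPolynomial.eval x p)
    (c : ℂ) (hc : c ≠ 0)
    (hjac : ∀ x : Fin n → ℂ,
      LinearMap.det ((fderiv ℂ f x : (Fin n → ℂ) →L[ℂ] (Fin n → ℂ)) :
        (Fin n → ℂ) →ₗ[ℂ] (Fin n → ℂ)) = c)
    (hinj : Function.Injective f) :
    Function.Bijective f := by
  choose p hp using hpoly
  have hf : f = fun v i => MvPolynomial.eval v (p i) := by
    funext v i; exact hp i v
  refine ⟨hinj, ?_⟩
  rw [hf] at hinj ⊢
  exact ax_grothendieck_univ p hinj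
end

section
/- Let f(x,y,z) = (x + y·h, y, h) with h = z − 3x⁵y + 2x⁷y², and set F = (f₁, f₂) : ℂ³ → ℂ², F(x,y,z) = (x + y·h(x,y,z), y). Along the path λ(t) = (t, 1/t², 0), as t → ∞ one has ‖λ(t)‖ → ∞, F(λ(t)) converges to a finite limit in ℂ², and ν(Jac(F)(λ(t))) → 0, where ν(A) = inf_{‖φ‖=1} ‖A*(φ)‖. Hence the Rabier set K̃_∞(F) is nonempty. -/
open Filter

noncomputable def h8 (x y z : ℂ) : ℂ := z - 3 * x ^ 5 * y + 2 * x ^ 7 * y ^ 2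

noncomputable def F8 : ℂ × ℂ × ℂ → ℂ × ℂ :=
  fun p => (p.1 + p.2.1 * h8 p.1 p.2.1 p.2.2, p.2.1)

noncomputable def lam8 (t : ℝ) : ℂ × ℂ × ℂ := ((t : ℂ), 1 / (t : ℂ) ^ 2, 0)

noncomputable def nu8 (A : (ℂ × ℂ × ℂ) →L[ℂ] ℂ × ℂ) : ℝ :=
  sInf {r : ℝ | ∃ φ : (ℂ × ℂ) →L[ℂ] ℂ, ‖φ‖ = 1 ∧ r = ‖φ.comp A‖}

noncomputable def Ktilde8 : Set (ℂ × ℂ) :=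
  {t | ∃ x : ℕ → ℂ × ℂ × ℂ,
    Tendsto (fun j => ‖x j‖) atTop atTop ∧
    Tendsto (fun j => F8 (x j)) atTop (nhds t) ∧
    Tendsto (fun j => nu8 (fderiv ℂ F8 (x j))) atTop (nhds 0)}


/-!
Along `λ(t) = (t, t⁻², 0)` one has `h = -t³`, and the first row of `Jac F`,
`(1 + y (14x⁶y² - 15x⁴y), h + y (4x⁷y - 3x⁵), y)`, collapses to `(0, 0, t⁻²)`. Testing `ν` on
the first coordinate functional therefore gives `ν(Jac F(λ(t))) ≤ t⁻² → 0`, while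
`F(λ(t)) = (0, t⁻²) → 0` and `‖λ(t)‖ ≥ |t|`. Sampling `λ` at the integers then puts `0` in `K̃_∞(F)`.
-/

open Topology

theorem fderiv_F8_apply (p v : ℂ × ℂ × ℂ) :
    fderiv ℂ F8 p v =
      ((1 + p.2.1 * (14 * p.1 ^ 6 * p.2.1 ^ 2 - 15 * p.1 ^ 4 * p.2.1)) * v.1 +
        (h8 p.1 p.2.1 p.2.2 + p.2.1 * (4 * p.1 ^ 7 * p.2.1 - 3 * p.1 ^ 5)) * v.2.1 +
        p.2.1 * v.2.2, v.2.1) := by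
  have hx : HasFDerivAt (fun q : ℂ × ℂ × ℂ => q.1) (ContinuousLinearMap.fst ℂ ℂ (ℂ × ℂ)) p :=
    hasFDerivAt_fst
  have hy : HasFDerivAt (fun q : ℂ × ℂ × ℂ => q.2.1) _ p := (hasFDerivAt_snd (𝕜 := ℂ) (p := p)).fst
  have hz : HasFDerivAt (fun q : ℂ × ℂ × ℂ => q.2.2) _ p := (hasFDerivAt_snd (𝕜 := ℂ) (p := p)).snd
  have hh : HasFDerivAt (fun q : ℂ × ℂ × ℂ => h8 q.1 q.2.1 q.2.2) _ p :=
    (hz.sub (((hx.pow 5).const_mul 3).mul hy)).add (((hx.pow 7).const_mul 2).mul (hy.pow 2))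
  have hF : HasFDerivAt F8 _ p := (hx.add (hy.mul hh)).prodMk hy
  rw [hF.fderiv]
  ext
  · simp only [Nat.add_one_sub_one, nsmul_eq_mul, Nat.cast_ofNat, pow_one, smul_add, smul_eq_mul,
      add_apply, sub_apply, smul_apply, ContinuousLinearMap.prod_apply,
      ContinuousLinearMap.comp_apply, ContinuousLinearMap.coe_fst', ContinuousLinearMap.coe_snd']
    ring
  · simp

theorem fderiv_F8_lam8_apply_fst {t : ℝ} (ht : t ≠ 0) (v : ℂ × ℂ × ℂ) :
    (fderiv ℂ F8 (lam8 t) v).1 = 1 / (t : ℂ) ^ 2 * v.2.2 := by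
  have htC : (t : ℂ) ≠ 0 := Complex.ofReal_ne_zero.mpr ht
  rw [fderiv_F8_apply]
  simp only [lam8, h8]
  field_simp
  ring

theorem F8_lam8 {t : ℝ} (ht : t ≠ 0) : F8 (lam8 t) = (0, 1 / (t : ℂ) ^ 2) := by
  have htC : (t : ℂ) ≠ 0 := Complex.ofReal_ne_zero.mpr ht
  simp only [F8, lam8, h8, Prod.mk.injEq, and_true]
  field_simp
  ring

theorem tendsto_one_div_ofReal_sq : Tendsto (fun t : ℝ => 1 / (t : ℂ) ^ 2) atTop (𝓝 0) := by
  have hreal : Tendsto (fun t : ℝ => 1 / t ^ 2) atTop (𝓝 0) :=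
    tendsto_const_nhds.div_atTop (tendsto_pow_atTop two_ne_zero)
  simpa [Function.comp_def] using (Complex.continuous_ofReal.tendsto 0).comp hreal

theorem nu8_nonneg (A : (ℂ × ℂ × ℂ) →L[ℂ] ℂ × ℂ) : 0 ≤ nu8 A :=
  Real.sInf_nonneg <| by rintro r ⟨φ, -, rfl⟩; exact norm_nonneg _

theorem nu8_le_norm_comp (A : (ℂ × ℂ × ℂ) →L[ℂ] ℂ × ℂ) {φ : (ℂ × ℂ) →L[ℂ] ℂ} (hφ : ‖φ‖ = 1) :
    nu8 A ≤ ‖φ.comp A‖ :=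
  csInf_le ⟨0, by rintro r ⟨ψ, -, rfl⟩; exact norm_nonneg _⟩ ⟨φ, hφ, rfl⟩

theorem nu8_fderiv_F8_lam8_le {t : ℝ} (ht : t ≠ 0) :
    nu8 (fderiv ℂ F8 (lam8 t)) ≤ ‖1 / (t : ℂ) ^ 2‖ := by
  refine (nu8_le_norm_comp _ (ContinuousLinearMap.norm_fst ℂ ℂ ℂ)).trans ?_
  refine ContinuousLinearMap.opNorm_le_bound _ (norm_nonneg _) fun v => ?_
  calc ‖(fderiv ℂ F8 (lam8 t) v).1‖ = ‖1 / (t : ℂ) ^ 2‖ * ‖v.2.2‖ := by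
        rw [fderiv_F8_lam8_apply_fst ht, norm_mul]
    _ ≤ ‖1 / (t : ℂ) ^ 2‖ * ‖v‖ := by
        gcongr
        exact (norm_snd_le v.2).trans (norm_snd_le v)

theorem tendsto_norm_lam8 : Tendsto (fun t : ℝ => ‖lam8 t‖) atTop atTop :=
  tendsto_atTop_mono (fun t => by simp [lam8]) tendsto_abs_atTop_atTop

theorem tendsto_F8_lam8 : Tendsto (fun t : ℝ => F8 (lam8 t)) atTop (𝓝 0) := by
  refine Tendsto.congr' ?_ (tendsto_const_nhds.prodMk_nhds tendsto_one_div_ofReal_sq)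
  filter_upwards [eventually_ne_atTop 0] with t ht
  exact (F8_lam8 ht).symm

theorem tendsto_nu8_fderiv_F8_lam8 :
    Tendsto (fun t : ℝ => nu8 (fderiv ℂ F8 (lam8 t))) atTop (𝓝 0) := by
  refine squeeze_zero' (.of_forall fun t => nu8_nonneg _) ?_
    (tendsto_zero_iff_norm_tendsto_zero.mp tendsto_one_div_ofReal_sq)
  filter_upwards [eventually_ne_atTop 0] with t ht
  exact nu8_fderiv_F8_lam8_le ht

theorem mem_Ktilde8_of_tendsto {γ : ℝ → ℂ × ℂ × ℂ} {L : ℂ × ℂ}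
    (hγ : Tendsto (fun t => ‖γ t‖) atTop atTop) (hF : Tendsto (fun t => F8 (γ t)) atTop (𝓝 L))
    (hν : Tendsto (fun t => nu8 (fderiv ℂ F8 (γ t))) atTop (𝓝 0)) : L ∈ Ktilde8 :=
  ⟨fun j => γ j, hγ.comp tendsto_natCast_atTop_atTop, hF.comp tendsto_natCast_atTop_atTop,
    hν.comp tendsto_natCast_atTop_atTop⟩

theorem stmt8 :
    Tendsto (fun t : ℝ => ‖lam8 t‖) atTop atTop ∧
    (∃ L : ℂ × ℂ, Tendsto (fun t : ℝ => F8 (lam8 t)) atTop (nhds L)) ∧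
    Tendsto (fun t : ℝ => nu8 (fderiv ℂ F8 (lam8 t))) atTop (nhds 0) ∧
    Ktilde8.Nonempty :=
  ⟨tendsto_norm_lam8, ⟨0, tendsto_F8_lam8⟩, tendsto_nu8_fderiv_F8_lam8,
    ⟨0, mem_Ktilde8_of_tendsto tendsto_norm_lam8 tendsto_F8_lam8 tendsto_nu8_fderiv_F8_lam8⟩⟩
end
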